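/- Let L be an α-sorted lattice (3 ≤ α ≤ h). If K is an absent key whose search path ends on a diagonal s < α + 1, then the search path of K has one of the forms D^a, D^a d^b, D^a d^b D, or D^a d^b D d^c (a, b, c ≥ 1 where applicable), and hence J(K) ≤ 4. -/

import Mathlib

open scoped Classical

/-- The number of maximal runs (blocks of consecutive equal letters) of a word. -/
def numRuns (w : List Bool) : ℕ := (w.destutter (· ≠ ·)).length

/-- A lattice data structure of height `h`.  The cell on row `r` and column `c`
(with `1 ≤ r`, `1 ≤ c`, `r + c ≤ h + 4`) holds the value `val r c : ℕ∞`, where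
`0` and `⊤` are the improper keys and all other values are proper keys.  The
cell on diagonal `s` and (diagonal-)position `j` is the cell `(s + 1 - j, j)`. -/
structure LDS (h : ℕ) where
  val : ℕ → ℕ → ℕ∞
  /-- every cell of row one contains `0` -/
  row_one : ∀ c, val 1 c = 0
  /-- every cell of column one contains `0` -/
  col_one : ∀ r, val r 1 = 0
  /-- every cell of diagonal `h + 3` except its head and tail contains `∞` -/
  top_diag : ∀ r c, 2 ≤ r → 2 ≤ c → r + c = h + 4 → val r c = ⊤
  /-- non-boundary cells contain positive keys (proper keys or `∞`) -/
  pos : ∀ r c, 2 ≤ r → 2 ≤ c → r + c ≤ h + 3 → 0 < val r c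
  /-- cells on diagonals up to `h + 1` contain proper keys (not `∞`) -/
  proper_inner : ∀ r c, 2 ≤ r → 2 ≤ c → r + c ≤ h + 2 → val r c ≠ ⊤
  /-- keys increase from left to right along rows -/
  row_mono : ∀ r c, 2 ≤ r → 2 ≤ c → r + (c + 1) ≤ h + 3 → val r c < val r (c + 1)
  /-- keys increase from bottom to top along columns -/
  col_mono : ∀ r c, 2 ≤ r → 2 ≤ c → (r + 1) + c ≤ h + 3 → val r c < val (r + 1) c
  /-- proper keys increase from head to tail along diagonals -/
  diag_mono : ∀ r c, 3 ≤ r → 2 ≤ c → r + c ≤ h + 3 → val (r - 1) (c + 1) ≠ ⊤ →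
      val r c < val (r - 1) (c + 1)

/-- A lattice of height `h` is sorted of degree `α` (`α`-sorted) if for each
`4 ≤ s ≤ α + 2` the first proper key of diagonal `s` (the cell `(s - 1, 2)`)
is greater than the last proper key of diagonal `s - 1` (the cell `(2, s - 2)`). -/
def AlphaSorted (h α : ℕ) (L : LDS h) : Prop :=
  ∀ s, 4 ≤ s → s ≤ α + 2 → L.val 2 (s - 2) < L.val (s - 1) 2

/-- The search path of `SearchLDS` starting at row `r`, column `c`:  the current
cell `C = val r c` is compared with the key `K`; the search stops if `C = K`
or `C = 0`, moves down-right (`d`, recorded as `true`) if `K > C`, and moves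
down (`D`, recorded as `false`) if `K < C`. -/
def searchPath (val : ℕ → ℕ → ℕ∞) (K : ℕ∞) : ℕ → ℕ → List Bool
  | 0, _ => []
  | r + 1, c =>
    if val (r + 1) c = K ∨ val (r + 1) c = 0 then []
    else if val (r + 1) c < K then true :: searchPath val K r (c + 1)
    else false :: searchPath val K r c

/-- The search path of a key `K` with respect to a lattice of height `h`:
`SearchLDS` starts at the second cell of diagonal `h + 2`, i.e. row `h + 1`,
column `2`. -/
def path (h : ℕ) (L : LDS h) (K : ℕ∞) : List Bool :=
  searchPath L.val K (h + 1) 2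

/-- `K` is a present key of `L`: it occupies some non-boundary cell. -/
def Present (h : ℕ) (L : LDS h) (K : ℕ∞) : Prop :=
  ∃ r c, 2 ≤ r ∧ 2 ≤ c ∧ r + c ≤ h + 3 ∧ L.val r c = K

/-- `K` is in the search space of `L`: a positive finite value. -/
def InSearchSpace (K : ℕ∞) : Prop := 0 < K ∧ K ≠ ⊤

/-! The search first descends column 2 with D moves. If `K` exceeded the last key of diagonal
`α + 1`, every key on the diagonals up to `α + 1` would lie below `K`, so no D move could happen
there and the search could not end on a diagonal `≤ α`; by sortedness at diagonal `α + 2`, `K` is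
therefore below the whole column from row `α + 1` up, and the descent stops at a row `r ≤ α`.
From there the search runs along diagonal `r + 1` with d moves. If it meets a key above `K`, one
D move takes it to diagonal `r`, all of whose keys lie below the first key of diagonal `r + 1`
(sortedness at `r + 1`), hence below `K`, so the search ends with d moves. -/

open List (replicate)

lemma numRuns_cons_cons (x y : Bool) (l : List Bool) :
    numRuns (x :: y :: l) = numRuns (y :: l) + if x = y then 0 else 1 := by
  by_cases hxy : x = y
  · subst hxy; simp [numRuns, List.destutter_cons']
  · simp [numRuns, List.destutter_cons', hxy]

lemma numRuns_append_le (l₁ l₂ : List Bool) : numRuns (l₁ ++ l₂) ≤ numRuns l₁ + numRuns l₂ := by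
  induction l₁ with
  | nil => simp [numRuns]
  | cons x l₁ ih =>
    cases l₁ with
    | nil =>
      cases l₂ with
      | nil => simp [numRuns]
      | cons y l₂ => rw [List.singleton_append, numRuns_cons_cons]; split <;> simp [numRuns]
    | cons y l₁ =>
      rw [List.cons_append, List.cons_append, numRuns_cons_cons x y (l₁ ++ l₂),
        numRuns_cons_cons x y l₁, ← List.cons_append]
      omega

lemma numRuns_replicate_le_one (a : ℕ) (x : Bool) : numRuns (replicate a x) ≤ 1 := by
  induction a with
  | zero => simp [numRuns]
  | succ a ih =>
    cases a with
    | zero => simp [numRuns]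
    | succ a => rwa [List.replicate_succ, List.replicate_succ, numRuns_cons_cons, if_pos rfl,
        ← List.replicate_succ]

def IsDdDdShape (w : List Bool) : Prop :=
  (∃ a, w = replicate a false) ∨
  (∃ a b, 1 ≤ a ∧ 1 ≤ b ∧ w = replicate a false ++ replicate b true) ∨
  (∃ a b, 1 ≤ a ∧ 1 ≤ b ∧ w = replicate a false ++ replicate b true ++ [false]) ∨
  (∃ a b c, 1 ≤ a ∧ 1 ≤ b ∧ 1 ≤ c ∧
    w = replicate a false ++ replicate b true ++ [false] ++ replicate c true)

lemma IsDdDdShape.numRuns_le_four {w : List Bool} (hw : IsDdDdShape w) : numRuns w ≤ 4 := by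
  have hrep := numRuns_replicate_le_one
  have hsingle : numRuns [false] = 1 := rfl
  rcases hw with ⟨a, rfl⟩ | ⟨a, b, -, -, rfl⟩ | ⟨a, b, -, -, rfl⟩ | ⟨a, b, c, -, -, -, rfl⟩
  · grw [hrep]; norm_num
  · grw [numRuns_append_le, hrep, hrep]; norm_num
  · grw [numRuns_append_le, numRuns_append_le, hrep, hrep, hsingle]; norm_num
  · grw [numRuns_append_le, numRuns_append_le, numRuns_append_le, hrep, hrep, hrep, hsingle]

lemma exists_gt_forall_lt_of_forall_ne {α : Type*} [LinearOrder α] {f : ℕ → α} {K : α} {n : ℕ}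
    (hne : ∀ i ≤ n, f i ≠ K) (hnot : ¬ ∀ i ≤ n, f i < K) :
    ∃ b ≤ n, K < f b ∧ ∀ i < b, f i < K := by
  have hex : ∃ b, b ≤ n ∧ K < f b := by
    simp only [not_forall, not_lt] at hnot
    obtain ⟨i, hi, hle⟩ := hnot
    exact ⟨i, hi, hle.lt_of_ne' (hne i hi)⟩
  obtain ⟨hb, hgt⟩ := Nat.find_spec hex
  exact ⟨Nat.find hex, hb, hgt, fun i hi =>
    (not_lt.1 fun hlt => Nat.find_min hex hi ⟨by omega, hlt⟩).lt_of_ne (hne i (by omega))⟩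

section SearchPath

variable {val : ℕ → ℕ → ℕ∞} {K : ℕ∞}

lemma searchPath_succ_of_lt {r c : ℕ} (hpos : 0 < val (r + 1) c) (hlt : val (r + 1) c < K) :
    searchPath val K (r + 1) c = true :: searchPath val K r (c + 1) := by
  rw [searchPath, if_neg (by simp [hlt.ne, hpos.ne']), if_pos hlt]

lemma searchPath_succ_of_gt (hK : 0 < K) {r c : ℕ} (hgt : K < val (r + 1) c) :
    searchPath val K (r + 1) c = false :: searchPath val K r c := by
  rw [searchPath, if_neg (by simp [hgt.ne', (hK.trans hgt).ne']), if_neg hgt.not_gt]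

lemma searchPath_one (hrow : ∀ c, val 1 c = 0) (c : ℕ) : searchPath val K 1 c = [] := by
  simp [searchPath, hrow]

lemma searchPath_add_eq_replicate_false_append (hK : 0 < K) {r c : ℕ} (a : ℕ)
    (hcol : ∀ r', r < r' → r' ≤ r + a → K < val r' c) :
    searchPath val K (r + a) c = replicate a false ++ searchPath val K r c := by
  induction a with
  | zero => rfl
  | succ a ih =>
    rw [← add_assoc, searchPath_succ_of_gt hK (hcol (r + a + 1) (by omega) (by omega)),
      ih fun r' h₁ h₂ => hcol r' h₁ (by omega), List.replicate_succ, List.cons_append]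

lemma searchPath_add_eq_replicate_true_append {r : ℕ} (b : ℕ) {c : ℕ}
    (hdiag : ∀ r' c', r' + c' = r + b + c → r < r' → c ≤ c' → 0 < val r' c' ∧ val r' c' < K) :
    searchPath val K (r + b) c = replicate b true ++ searchPath val K r (c + b) := by
  induction b generalizing c with
  | zero => rfl
  | succ b ih =>
    obtain ⟨hpos, hlt⟩ := hdiag (r + b + 1) c (by omega) (by omega) le_rfl
    rw [← add_assoc, searchPath_succ_of_lt hpos hlt,
      ih fun r' c' hsum h₁ h₂ => hdiag r' c' (by omega) h₁ (by omega),
      List.replicate_succ, List.cons_append, add_assoc, add_comm 1 b]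

lemma searchPath_eq_replicate_true (hrow : ∀ c, val 1 c = 0) {r c : ℕ}
    (hdiag : ∀ r' c', r' + c' = r + 1 + c → 1 < r' → c ≤ c' → 0 < val r' c' ∧ val r' c' < K) :
    searchPath val K (r + 1) c = replicate r true := by
  rw [add_comm, searchPath_add_eq_replicate_true_append r fun r' c' hsum ↦ hdiag r' c' (by omega),
    searchPath_one hrow, List.append_nil]

lemma searchPath_eq_replicate_true_append_false_cons (hK : 0 < K) (hrow : ∀ c, val 1 c = 0)
    {r b c : ℕ}
    (hrun : ∀ r' c', r' + c' = r + 2 + b + c → r + 2 < r' → c ≤ c' →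
      0 < val r' c' ∧ val r' c' < K)
    (hblock : K < val (r + 2) (c + b))
    (hbelow : ∀ r' c', r' + c' = r + 1 + (c + b) → 1 < r' → c + b ≤ c' →
      0 < val r' c' ∧ val r' c' < K) :
    searchPath val K (r + 2 + b) c = replicate b true ++ false :: replicate r true := by
  rw [searchPath_add_eq_replicate_true_append b hrun, searchPath_succ_of_gt hK hblock,
    searchPath_eq_replicate_true hrow hbelow]

/-- Every D move lowers the diagonal by one, so this says that the search does not end below
diagonal `m - 1`. -/
lemma count_false_searchPath_add_le (hrow : ∀ c, val 1 c = 0) {m : ℕ}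
    (hbelow : ∀ r c, 2 ≤ r → 2 ≤ c → r + c ≤ m → val r c < K) :
    ∀ r c, 2 ≤ c → m ≤ r + c → (searchPath val K r c).count false + m ≤ r + c := by
  intro r
  induction r with
  | zero => intro c _ hm; simpa [searchPath] using hm
  | succ r ih =>
    intro c hc hm
    rw [searchPath]
    split_ifs with hstop hlt
    · simpa using hm
    · simpa using (ih (c + 1) (by omega) (by omega)).trans (by omega)
    · have hr : r ≠ 0 := by rintro rfl; exact hstop (Or.inr (hrow c))
      have hm' : m < r + 1 + c := by
        by_contra! hle
        exact hlt (hbelow (r + 1) c (by omega) hc hle)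
      have := ih c hc (by omega)
      simp only [List.count_cons_self]
      omega

lemma searchPath_shape_of_diag (hK : 0 < K) (hrow : ∀ c, val 1 c = 0) {r c : ℕ} (hr : 2 ≤ r)
    (hstart : val r c < K)
    (hdiag : ∀ r' c', r' + c' = r + c → 1 < r' → c ≤ c' → 0 < val r' c' ∧ val r' c' ≠ K)
    (hbelow : ∀ r' c', r' + c' + 1 = r + c → 1 < r' → c < c' → 0 < val r' c' ∧ val r' c' < K) :
    searchPath val K r c = replicate (r - 1) true ∨
    (∃ b, 1 ≤ b ∧ searchPath val K r c = replicate b true ++ [false]) ∨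
    (∃ b d, 1 ≤ b ∧ 1 ≤ d ∧
      searchPath val K r c = replicate b true ++ [false] ++ replicate d true) := by
  by_cases hall : ∀ i ≤ r - 2, val (r - i) (c + i) < K
  · left
    obtain ⟨n, rfl⟩ : ∃ n, r = n + 1 := ⟨r - 1, by omega⟩
    refine searchPath_eq_replicate_true hrow fun r' c' hsum h₁ h₂ =>
      ⟨(hdiag r' c' (by omega) h₁ h₂).1, ?_⟩
    simpa [show n + 1 - (c' - c) = r' by omega, show c + (c' - c) = c' by omega]
      using hall (c' - c) (by omega)
  obtain ⟨b, hb, hblock, hrun⟩ := exists_gt_forall_lt_of_forall_ne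
    (fun i hi => (hdiag (r - i) (c + i) (by omega) (by omega) (by omega)).2) hall
  have hb0 : b ≠ 0 := by
    rintro rfl
    exact hblock.not_gt (by simpa using hstart)
  obtain ⟨n, rfl⟩ : ∃ n, r = n + 2 + b := ⟨r - b - 2, by omega⟩
  rw [searchPath_eq_replicate_true_append_false_cons hK hrow (r := n)
    (fun r' c' hsum h₁ h₂ => ⟨(hdiag r' c' (by omega) (by omega) h₂).1, by
      simpa [show n + 2 + b - (c' - c) = r' by omega, show c + (c' - c) = c' by omega]
        using hrun (c' - c) (by omega)⟩)
    (by simpa using hblock)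
    (fun r' c' hsum h₁ h₂ => hbelow r' c' (by omega) h₁ (by omega))]
  rcases Nat.eq_zero_or_pos n with rfl | hn
  · exact Or.inr (Or.inl ⟨b, by omega, rfl⟩)
  · exact Or.inr (Or.inr ⟨b, n, by omega, hn, by simp⟩)

end SearchPath

namespace LDS

variable {h : ℕ} (L : LDS h)

lemma monotoneOn_val_col {c : ℕ} (hc : 2 ≤ c) :
    MonotoneOn (L.val · c) (Set.Icc 2 (h + 3 - c)) :=
  monotoneOn_of_le_succ Set.ordConnected_Icc fun r _ hr hr' => by
    simp only [Order.succ_eq_add_one, Set.mem_Icc] at hr hr'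
    exact (L.col_mono r c hr.1 hc (by omega)).le

lemma monotoneOn_val_row {r : ℕ} (hr : 2 ≤ r) :
    MonotoneOn (L.val r) (Set.Icc 2 (h + 3 - r)) :=
  monotoneOn_of_le_succ Set.ordConnected_Icc fun c _ hc hc' => by
    simp only [Order.succ_eq_add_one, Set.mem_Icc] at hc hc'
    exact (L.row_mono r c hr hc.1 (by omega)).le

lemma val_le_val_two {r c : ℕ} (hr : 2 ≤ r) (hc : 2 ≤ c) (hrc : r + c ≤ h + 2) :
    L.val r c ≤ L.val 2 (r + c - 2) := by
  induction r, hr using Nat.le_induction generalizing c with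
  | base => simp
  | succ r hr ih =>
    calc L.val (r + 1) c ≤ L.val r (c + 1) := le_of_lt <| by
          simpa using L.diag_mono (r + 1) c (by omega) hc (by omega)
            (by simpa using L.proper_inner r (c + 1) hr (by omega) (by omega))
      _ ≤ L.val 2 (r + (c + 1) - 2) := ih (by omega) (by omega)
      _ = L.val 2 (r + 1 + c - 2) := by rw [Nat.add_right_comm, add_assoc]

lemma val_le_val_two_of_add_le {r c m : ℕ} (hr : 2 ≤ r) (hc : 2 ≤ c) (hrc : r + c ≤ m + 2)
    (hm : m ≤ h) : L.val r c ≤ L.val 2 m :=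
  (L.val_le_val_two hr hc (by omega)).trans
    (L.monotoneOn_val_row le_rfl ⟨by omega, by omega⟩ ⟨by omega, by omega⟩ (by omega))

variable {L} {K : ℕ∞}

lemma lt_val_two_of_count_false (habs : ¬ Present h L K) {α : ℕ} (hα : 2 ≤ α)
    (hαh : α ≤ h) (hD : h + 2 ≤ (path h L K).count false + α) : K < L.val 2 α := by
  rcases lt_trichotomy K (L.val 2 α) with hlt | heq | hgt
  · exact hlt
  · exact absurd ⟨2, α, le_rfl, hα, by omega, heq.symm⟩ habs
  · have := count_false_searchPath_add_le L.row_one (m := α + 2)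
      (fun r c hr hc hrc => (L.val_le_val_two_of_add_le hr hc hrc hαh).trans_lt hgt)
      (h + 1) 2 le_rfl (by omega)
    rw [← path] at this
    omega

lemma path_eq_replicate_false (hK : 0 < K) (h22 : K < L.val 2 2) :
    path h L K = replicate h false := by
  rw [path, add_comm, searchPath_add_eq_replicate_false_append hK h fun r hr hrh =>
    h22.trans_le (L.monotoneOn_val_col le_rfl ⟨le_rfl, by omega⟩ ⟨hr, by omega⟩ hr),
    searchPath_one L.row_one, List.append_nil]

lemma exists_path_eq_replicate_false_append (hK : 0 < K) (habs : ¬ Present h L K) {n : ℕ}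
    (hn2 : 2 ≤ n) (hnh : n ≤ h) (h22 : L.val 2 2 < K) (hn : K < L.val (n + 1) 2) :
    ∃ r, 2 ≤ r ∧ r ≤ n ∧ L.val r 2 < K ∧
      path h L K = replicate (h + 1 - r) false ++ searchPath L.val K r 2 := by
  let P r := L.val r 2 < K
  set r := Nat.findGreatest P n
  have hr2 : 2 ≤ r := Nat.le_findGreatest hn2 h22
  have hrn : r ≤ n := Nat.findGreatest_le n
  have hcol : ∀ r', r < r' → r' ≤ r + (h + 1 - r) → K < L.val r' 2 := by
    intro r' hr' hr'h
    rcases le_or_gt r' n with hr'n | hr'n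
    · exact (not_lt.1 (Nat.findGreatest_is_greatest (P := P) hr' hr'n)).lt_of_ne'
        fun heq => habs ⟨r', 2, by omega, le_rfl, by omega, heq⟩
    · exact hn.trans_le
        (L.monotoneOn_val_col le_rfl ⟨by omega, by omega⟩ ⟨by omega, by omega⟩ hr'n)
  refine ⟨r, hr2, hrn, Nat.findGreatest_spec (P := P) hn2 h22, ?_⟩
  rw [path, ← searchPath_add_eq_replicate_false_append hK _ hcol]
  congr 1
  omega

lemma searchPath_shape_of_alphaSorted (hK : 0 < K) (habs : ¬ Present h L K) {α : ℕ}
    (hsorted : AlphaSorted h α L) {r : ℕ} (hr : 2 ≤ r) (hrα : r ≤ α + 1) (hrh : r ≤ h + 1)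
    (hrK : L.val r 2 < K) :
    searchPath L.val K r 2 = replicate (r - 1) true ∨
    (∃ b, 1 ≤ b ∧ searchPath L.val K r 2 = replicate b true ++ [false]) ∨
    (∃ b d, 1 ≤ b ∧ 1 ≤ d ∧
      searchPath L.val K r 2 = replicate b true ++ [false] ++ replicate d true) := by
  refine searchPath_shape_of_diag hK L.row_one hr hrK
    (fun r' c' hsum hr' hc' => ⟨L.pos r' c' hr' hc' (by omega),
      fun heq => habs ⟨r', c', hr', hc', by omega, heq⟩⟩)
    (fun r' c' hsum hr' hc' => ⟨L.pos r' c' hr' (by omega) (by omega), ?_⟩)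
  calc L.val r' c' ≤ L.val 2 (r - 1) :=
        L.val_le_val_two_of_add_le hr' (by omega) (by omega) (by omega)
    _ < L.val r 2 := by simpa using hsorted (r + 1) (by omega) (by omega)
    _ < K := hrK

end LDS

/-- If `L` is an `α`-sorted lattice (`3 ≤ α ≤ h`) and `K` is an absent key of
the search space whose search path ends on a diagonal `s < α + 1`, then the
search path of `K` has one of the forms `D^a`, `D^a d^b`, `D^a d^b D`, or
`D^a d^b D d^c` (with `a, b, c ≥ 1` where applicable), and hence `J(K) ≤ 4`. -/
theorem alphaSorted_absent_jump_factor (h α s : ℕ) (L : LDS h) (K : ℕ∞)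
    (hα3 : 3 ≤ α) (hαh : α ≤ h) (hsorted : AlphaSorted h α L)
    (hK : InSearchSpace K) (habs : ¬ Present h L K)
    (hs : s + (path h L K).count false = h + 2) (hsα : s < α + 1) :
    ((∃ a, path h L K = List.replicate a false) ∨
     (∃ a b, 1 ≤ a ∧ 1 ≤ b ∧
        path h L K = List.replicate a false ++ List.replicate b true) ∨
     (∃ a b, 1 ≤ a ∧ 1 ≤ b ∧
        path h L K = List.replicate a false ++ List.replicate b true ++ [false]) ∨
     (∃ a b c, 1 ≤ a ∧ 1 ≤ b ∧ 1 ≤ c ∧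
        path h L K = List.replicate a false ++ List.replicate b true ++ [false] ++
          List.replicate c true)) ∧
      numRuns (path h L K) ≤ 4 := by
  have hKα : K < L.val (α + 1) 2 :=
    (LDS.lt_val_two_of_count_false habs (by omega) hαh (by omega)).trans
      (by simpa using hsorted (α + 2) (by omega) le_rfl)
  suffices hshape : IsDdDdShape (path h L K) from ⟨hshape, hshape.numRuns_le_four⟩
  have h22 : L.val 2 2 ≠ K := fun heq => habs ⟨2, 2, le_rfl, le_rfl, by omega, heq⟩
  rcases h22.lt_or_gt with h22 | h22
  · obtain ⟨r, hr, hrα, hrK, hpath⟩ :=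
      LDS.exists_path_eq_replicate_false_append hK.1 habs (by omega) hαh h22 hKα
    rcases LDS.searchPath_shape_of_alphaSorted hK.1 habs hsorted hr (by omega) (by omega) hrK
      with hd | ⟨b, hb, hd⟩ | ⟨b, d, hb, hd', hd⟩ <;> rw [hpath, hd]
    · exact Or.inr (Or.inl ⟨_, _, by omega, by omega, rfl⟩)
    · exact Or.inr (Or.inr (Or.inl ⟨h + 1 - r, b, by omega, hb, by simp⟩))
    · exact Or.inr (Or.inr (Or.inr ⟨h + 1 - r, b, d, by omega, hb, hd', by simp⟩))
  · exact Or.inl ⟨h, LDS.path_eq_replicate_false hK.1 h22⟩
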